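/- arXiv:1501.06049 — 6 statements merged into one kernel-verified Lean document; each statement's English description precedes it below -/
import Mathlib

section
/- In a convex combination space, for any elements u, v in the convexifiable domain K(X) and any λ ∈ (0,1), the distances satisfy d([λ,u;1−λ,v], u) = (1−λ)·d(u,v) and d([λ,u;1−λ,v], v) = λ·d(u,v). -/
open scoped BigOperators
open Filter MeasureTheory

/-- A convex combination space (Terán–Molchanov): a metric space with an
`n`-ary convex combination operation for positive weights summing to `1`. -/
structure CCSpace (X : Type) [MetricSpace X] where
  /-- the convex combination operation `[w 0, u 0; …; w (n-1), u (n-1)]` -/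
  comb : ∀ {n : ℕ}, (Fin n → ℝ) → (Fin n → X) → X
  /-- the convexification operator -/
  K : X → X
  comb_single : ∀ u : X, comb (fun _ : Fin 1 => (1 : ℝ)) (fun _ => u) = u
  /-- (CC.i) commutativity -/
  comb_perm : ∀ {n : ℕ} (w : Fin n → ℝ) (u : Fin n → X) (σ : Equiv.Perm (Fin n)),
    (∀ i, 0 < w i) → (∑ i, w i) = 1 → comb w u = comb (w ∘ σ) (u ∘ σ)
  /-- (CC.ii) associativity: the last two terms may be combined first -/
  comb_assoc : ∀ {n : ℕ} (w : Fin (n + 2) → ℝ) (u : Fin (n + 2) → X),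
    (∀ i, 0 < w i) → (∑ i, w i) = 1 →
    comb w u =
      comb
        (Fin.snoc (fun i : Fin n => w (Fin.castLE (by omega) i))
          (w ⟨n, by omega⟩ + w ⟨n + 1, by omega⟩))
        (Fin.snoc (fun i : Fin n => u (Fin.castLE (by omega) i))
          (comb
            ![w ⟨n, by omega⟩ / (w ⟨n, by omega⟩ + w ⟨n + 1, by omega⟩),
              w ⟨n + 1, by omega⟩ / (w ⟨n, by omega⟩ + w ⟨n + 1, by omega⟩)]
            ![u ⟨n, by omega⟩, u ⟨n + 1, by omega⟩]))
  /-- (CC.iii) continuity in the weight -/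
  comb_cont : ∀ u v : X,
    ContinuousOn (fun t : ℝ => comb ![t, 1 - t] ![u, v]) (Set.Ioo (0 : ℝ) 1)
  /-- (CC.iv) negative curvature -/
  comb_nc : ∀ {n : ℕ} (w : Fin n → ℝ) (u v : Fin n → X),
    (∀ i, 0 < w i) → (∑ i, w i) = 1 →
    dist (comb w u) (comb w v) ≤ ∑ i, w i * dist (u i) (v i)
  /-- (CC.v) convexification: `[n⁻¹, u]ᵢ₌₁ⁿ → K u` -/
  tendsto_K : ∀ u : X,
    Tendsto (fun n : ℕ => comb (fun _ : Fin n => (n : ℝ)⁻¹) (fun _ => u))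
      atTop (nhds (K u))

namespace CCSpace

variable {X : Type} [MetricSpace X] (S : CCSpace X)

/-- The convexifiable domain `K(X)`: the set of convex points. -/
def KX : Set X := {u : X | S.K u = u}

/-- Binary convex combination with weights in `[0,1]`, extended to the endpoints
by discarding the zero-weight term. -/
noncomputable def comb2 (t : ℝ) (x y : X) : X :=
  if t = 0 then y else if t = 1 then x else S.comb ![t, 1 - t] ![x, y]

/-- Convex combination for nonnegative weights summing to `1`, defined by
discarding the zero-weight terms. -/
noncomputable def combE {n : ℕ} (w : Fin n → ℝ) (u : Fin n → X) : X :=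
  letI : DecidablePred fun i : Fin n => w i ≠ 0 := Classical.decPred _
  S.comb (fun j => w ((Fintype.equivFin {i : Fin n // w i ≠ 0}).symm j))
    (fun j => u ((Fintype.equivFin {i : Fin n // w i ≠ 0}).symm j))

/-- A function is affine if it commutes with all convex combinations. -/
def IsAffine (f : X → ℝ) : Prop :=
  ∀ ⦃n : ℕ⦄ (w : Fin n → ℝ) (x : Fin n → X), (∀ i, 0 < w i) → (∑ i, w i) = 1 →
    f (S.comb w x) = ∑ i, w i * f (x i)

/-- Midpoint convexity. -/
def MidpointConvex (φ : X → ℝ) : Prop :=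
  ∀ x y : X, φ (S.comb ![(1 : ℝ) / 2, 1 / 2] ![x, y]) ≤ (φ x + φ y) / 2

end CCSpace

/-!
A convex point `u` is fixed by every combination `[λ, u; 1 - λ, u]`. For rational `λ = p/(p+q)`,
commutativity and associativity split the uniform average of `m(p+q)` copies of `u` as
`[p/(p+q), avg_{mp} u; q/(p+q), avg_{mq} u]`; as `m → ∞` all three averages tend to `K u = u`, and
the binary combination is continuous by negative curvature. Continuity in the weight passes to
real `λ`. Negative curvature against `[λ, u; 1 - λ, u] = u` and `[λ, v; 1 - λ, v] = v` then gives
`d([λ,u;1−λ,v], u) ≤ (1−λ) d(u,v)` and `d([λ,u;1−λ,v], v) ≤ λ d(u,v)`, and the triangle inequality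
forces equality in both.
-/

open Topology

lemma vec2_pos {a b : ℝ} (ha : 0 < a) (hb : 0 < b) : ∀ i, 0 < ![a, b] i := by
  intro i; fin_cases i <;> assumption

lemma vec2_sum_eq_one {a b : ℝ} (h : a + b = 1) : ∑ i, ![a, b] i = 1 := by
  simpa [Fin.sum_univ_two] using h

namespace CCSpace

variable {X : Type} [MetricSpace X] (S : CCSpace X)

/-- `[a/(a+b), x; b/(a+b), y]`: with unnormalised weights the regrouping identities below need no
weight arithmetic. -/
noncomputable def binComb (a b : ℝ) (x y : X) : X :=
  S.comb ![a / (a + b), b / (a + b)] ![x, y]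

lemma comb_pair_eq_binComb (l : ℝ) (x y : X) :
    S.comb ![l, 1 - l] ![x, y] = S.binComb l (1 - l) x y := by
  simp [binComb]

lemma binComb_mul_mul {c : ℝ} (hc : c ≠ 0) (a b : ℝ) (x y : X) :
    S.binComb (c * a) (c * b) x y = S.binComb a b x y := by
  simp only [binComb, ← mul_add, mul_div_mul_left _ _ hc]

lemma binComb_mul_self {c : ℝ} (hc : c ≠ 0) (k : ℝ) (x y : X) :
    S.binComb (k * c) c x y = S.binComb k 1 x y := by
  rw [← S.binComb_mul_mul hc k 1, mul_one, mul_comm]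

lemma binComb_comm {a b : ℝ} (ha : 0 < a) (hb : 0 < b) (x y : X) :
    S.binComb a b x y = S.binComb b a y x := by
  have hpos := vec2_pos (div_pos ha (add_pos ha hb)) (div_pos hb (add_pos ha hb))
  have hsum := vec2_sum_eq_one (a := a / (a + b)) (b := b / (a + b)) (by field_simp)
  rw [binComb, S.comb_perm _ _ (Equiv.swap 0 1) hpos hsum, binComb, add_comm b a]
  congr 1 <;> ext i <;> fin_cases i <;> simp

lemma comb_three_eq_binComb {a b c : ℝ} (ha : 0 < a) (hb : 0 < b) (hc : 0 < c) (x y z : X) :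
    S.comb ![a / (a + b + c), b / (a + b + c), c / (a + b + c)] ![x, y, z] =
      S.binComb a (b + c) x (S.binComb b c y z) := by
  have hpos : ∀ i, 0 < ![a / (a + b + c), b / (a + b + c), c / (a + b + c)] i := by
    intro i; fin_cases i <;> simp <;> positivity
  have hsum : ∑ i, ![a / (a + b + c), b / (a + b + c), c / (a + b + c)] i = 1 := by
    simp [Fin.sum_univ_three]; field_simp
  rw [S.comb_assoc _ _ hpos hsum, binComb, binComb]
  congr 1
  · ext i; fin_cases i <;> simp [Fin.snoc, add_assoc]
    field_simp
  · ext i; fin_cases i <;> simp [Fin.snoc]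
    congr 1; ext j; fin_cases j <;> field_simp

lemma comb_three_rotate {a b c : ℝ} (ha : 0 < a) (hb : 0 < b) (hc : 0 < c) (hs : a + b + c = 1)
    (x y z : X) : S.comb ![a, b, c] ![x, y, z] = S.comb ![c, a, b] ![z, x, y] := by
  have hpos : ∀ i, 0 < ![a, b, c] i := by intro i; fin_cases i <;> simpa
  have hsum : ∑ i, ![a, b, c] i = 1 := by simpa [Fin.sum_univ_three] using hs
  rw [S.comb_perm _ _ (finRotate 3).symm hpos hsum]
  congr 1 <;> ext i <;> fin_cases i <;> rfl

lemma binComb_assoc {a b c : ℝ} (ha : 0 < a) (hb : 0 < b) (hc : 0 < c) (x y z : X) :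
    S.binComb a (b + c) x (S.binComb b c y z) = S.binComb (a + b) c (S.binComb a b x y) z := by
  have hs : a + b + c = c + a + b := by ring
  rw [← S.comb_three_eq_binComb ha hb hc, S.comb_three_rotate (by positivity) (by positivity)
    (by positivity) (by field_simp), hs, S.comb_three_eq_binComb hc ha hb,
    S.binComb_comm hc (by positivity)]

noncomputable def avg (n : ℕ) (x : X) : X :=
  S.comb (fun _ : Fin n => (n : ℝ)⁻¹) (fun _ => x)

lemma avg_one (x : X) : S.avg 1 x = x := by
  simpa [avg] using S.comb_single x

lemma snoc_const_self {α : Type*} {m : ℕ} (c : α) :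
    (Fin.snoc (fun _ : Fin m => c) c : Fin (m + 1) → α) = fun _ => c := by
  ext i; refine Fin.lastCases ?_ (fun j => ?_) i <;> simp

lemma comb_snoc_const (n : ℕ) {a b : ℝ} (ha : 0 < a) (hb : 0 < b) (hab : (n + 1) * a + b = 1)
    (x y : X) :
    S.comb (Fin.snoc (fun _ : Fin (n + 1) => a) b) (Fin.snoc (fun _ : Fin (n + 1) => x) y) =
      S.binComb ((n + 1) * a) b (S.avg (n + 1) x) y := by
  induction n generalizing a b y with
  | zero =>
    have hw : (Fin.snoc (fun _ : Fin 1 => a) b : Fin 2 → ℝ) = ![a, b] := by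
      ext i; fin_cases i <;> rfl
    have hx : (Fin.snoc (fun _ : Fin 1 => x) y : Fin 2 → X) = ![S.avg 1 x, y] := by
      ext i; fin_cases i <;> simp [Fin.snoc, avg_one]
    simp only [Nat.cast_zero, zero_add, one_mul] at hab ⊢
    simp [hw, hx, binComb, hab]
  | succ n ih =>
    have hpos : ∀ i, 0 < (Fin.snoc (fun _ : Fin (n + 2) => a) b : Fin (n + 3) → ℝ) i := by
      intro i; refine Fin.lastCases ?_ (fun j => ?_) i <;> simpa
    have hsum : ∑ i, (Fin.snoc (fun _ : Fin (n + 2) => a) b : Fin (n + 3) → ℝ) i = 1 := by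
      rw [Fin.sum_snoc]; simp; push_cast at hab; linarith
    have hmerge : S.comb (Fin.snoc (fun _ : Fin (n + 2) => a) b)
        (Fin.snoc (fun _ : Fin (n + 2) => x) y) =
        S.comb (Fin.snoc (fun _ : Fin (n + 1) => a) (a + b))
          (Fin.snoc (fun _ : Fin (n + 1) => x) (S.binComb a b x y)) := by
      rw [S.comb_assoc _ _ hpos hsum, binComb]
      congr 1 <;> ext i <;> refine Fin.lastCases ?_ (fun j => ?_) i <;>
        simp [Fin.snoc, Fin.is_le] <;> omega
    have hsucc : S.binComb ((n + 1) * a) a (S.avg (n + 1) x) x = S.avg (n + 2) x := by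
      have hc : (0 : ℝ) < ((n + 2 : ℕ) : ℝ)⁻¹ := by positivity
      have h := ih hc hc (by push_cast; field_simp; ring) x
      rw [snoc_const_self, snoc_const_self] at h
      refine Eq.trans ?_ h.symm
      rw [S.binComb_mul_self ha.ne', S.binComb_mul_self hc.ne']
    rw [hmerge, ih ha (by positivity) (by push_cast at hab; linarith),
      S.binComb_assoc (by positivity) ha hb, hsucc, show ((n : ℝ) + 1) * a + a = ((n + 1 : ℕ) + 1) * a by push_cast; ring]

lemma avg_succ {n : ℕ} (hn : 0 < n) (x : X) :
    S.avg (n + 1) x = S.binComb n 1 (S.avg n x) x := by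
  obtain ⟨m, rfl⟩ : ∃ m, n = m + 1 := ⟨n - 1, by omega⟩
  have hc : (0 : ℝ) < ((m + 2 : ℕ) : ℝ)⁻¹ := by positivity
  have h := S.comb_snoc_const m hc hc (by push_cast; field_simp; ring) x x
  rw [snoc_const_self, snoc_const_self] at h
  rw [avg, h, S.binComb_mul_self hc.ne', Nat.cast_add_one]

lemma avg_add {p q : ℕ} (hp : 0 < p) (hq : 0 < q) (x : X) :
    S.avg (p + q) x = S.binComb p q (S.avg p x) (S.avg q x) := by
  induction q, hq using Nat.le_induction with
  | base => rw [S.avg_succ hp, avg_one, Nat.cast_one]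
  | succ q hq ih =>
    rw [← add_assoc, S.avg_succ (by omega), ih, Nat.cast_add, ← S.binComb_assoc (by positivity)
      (by positivity) one_pos, ← S.avg_succ hq]
    push_cast; ring_nf

lemma dist_binComb_le {a b : ℝ} (ha : 0 < a) (hb : 0 < b) (x y x' y' : X) :
    dist (S.binComb a b x y) (S.binComb a b x' y') ≤ max (dist x x') (dist y y') := by
  have hpos := vec2_pos (div_pos ha (add_pos ha hb)) (div_pos hb (add_pos ha hb))
  have hsum := vec2_sum_eq_one (a := a / (a + b)) (b := b / (a + b)) (by field_simp)
  calc dist (S.binComb a b x y) (S.binComb a b x' y')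
      ≤ a / (a + b) * dist x x' + b / (a + b) * dist y y' := by
        simpa [Fin.sum_univ_two, binComb] using S.comb_nc _ ![x, y] ![x', y'] hpos hsum
    _ ≤ a / (a + b) * max (dist x x') (dist y y') + b / (a + b) * max (dist x x') (dist y y') := by
        gcongr
        exacts [le_max_left _ _, le_max_right _ _]
    _ = max (dist x x') (dist y y') := by field_simp

lemma continuous_binComb {a b : ℝ} (ha : 0 < a) (hb : 0 < b) :
    Continuous fun p : X × X => S.binComb a b p.1 p.2 :=
  (LipschitzWith.of_dist_le_mul (K := 1) fun p p' => by
    rw [NNReal.coe_one, one_mul, Prod.dist_eq]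
    exact S.dist_binComb_le ha hb p.1 p.2 p'.1 p'.2).continuous

lemma tendsto_avg_of_mem_KX {u : X} (hu : u ∈ S.KX) {f : ℕ → ℕ} (hf : Tendsto f atTop atTop) :
    Tendsto (fun m => S.avg (f m) u) atTop (𝓝 u) := by
  have hKu : S.K u = u := hu
  have h := (S.tendsto_K u).comp hf
  rwa [hKu] at h

lemma binComb_self_of_mem_KX {u : X} (hu : u ∈ S.KX) {p q : ℕ} (hp : 0 < p) (hq : 0 < q) :
    S.binComb p q u u = u := by
  have hmul : ∀ {k : ℕ}, 0 < k → Tendsto (fun m : ℕ => m * k) atTop atTop := fun hk =>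
    tendsto_atTop_mono (fun m => Nat.le_mul_of_pos_right m hk) tendsto_id
  have hsplit : ∀ᶠ m : ℕ in atTop,
      S.binComb p q (S.avg (m * p) u) (S.avg (m * q) u) = S.avg (m * p + m * q) u := by
    filter_upwards [eventually_gt_atTop 0] with m hm
    rw [S.avg_add (by positivity) (by positivity), Nat.cast_mul, Nat.cast_mul,
      S.binComb_mul_mul (by positivity)]
  refine tendsto_nhds_unique_of_eventuallyEq ?_ (S.tendsto_avg_of_mem_KX hu ?_) hsplit
  · exact ((S.continuous_binComb (by positivity) (by positivity)).tendsto (u, u)).comp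
      ((S.tendsto_avg_of_mem_KX hu (hmul hp)).prodMk_nhds (S.tendsto_avg_of_mem_KX hu (hmul hq)))
  · simpa only [← mul_add] using hmul (Nat.add_pos_left hp q)

lemma comb_pair_rat_self_of_mem_KX {u : X} (hu : u ∈ S.KX) {r : ℚ} (hr : (r : ℝ) ∈ Set.Ioo 0 1) :
    S.comb ![(r : ℝ), 1 - r] ![u, u] = u := by
  obtain ⟨hr0, hr1⟩ := hr
  have hnum : 0 < r.num := Rat.num_pos.mpr (by exact_mod_cast hr0)
  have hlt : r.num < r.den := Rat.num_lt_denom_iff.mpr (by exact_mod_cast hr1)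
  obtain ⟨p, hp⟩ : ∃ p : ℕ, r.num = p := ⟨r.num.toNat, (Int.toNat_of_nonneg hnum.le).symm⟩
  have hpd : p < r.den := by omega
  have hr : (r : ℝ) = (r.den : ℝ)⁻¹ * p := by
    rw [Rat.cast_def, hp]; push_cast; ring
  have hr' : 1 - (r : ℝ) = (r.den : ℝ)⁻¹ * (r.den - p : ℕ) := by
    rw [hr, Nat.cast_sub hpd.le]; field_simp
  rw [comb_pair_eq_binComb, hr', hr, S.binComb_mul_mul (by positivity)]
  exact S.binComb_self_of_mem_KX hu (by omega) (by omega)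

lemma comb_pair_self_of_mem_KX {u : X} (hu : u ∈ S.KX) {l : ℝ} (hl : l ∈ Set.Ioo 0 1) :
    S.comb ![l, 1 - l] ![u, u] = u := by
  refine Set.EqOn.of_subset_closure (s := Set.Ioo 0 1 ∩ Set.range ((↑) : ℚ → ℝ))
    (fun t ⟨ht, r, hr⟩ => ?_) (S.comb_cont u u) continuousOn_const Set.inter_subset_left
    (Rat.denseRange_cast.open_subset_closure_inter isOpen_Ioo) hl
  subst hr
  exact S.comb_pair_rat_self_of_mem_KX hu ht

end CCSpace

/-- In a CC space, for `u, v` in the convexifiable domain and `λ ∈ (0,1)`,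
`d([λ,u;1−λ,v], u) = (1−λ) d(u,v)` and `d([λ,u;1−λ,v], v) = λ d(u,v)`. -/
theorem stmt0 {X : Type} [MetricSpace X] (S : CCSpace X) (u v : X)
    (hu : u ∈ S.KX) (hv : v ∈ S.KX) (l : ℝ) (hl : l ∈ Set.Ioo (0 : ℝ) 1) :
    dist (S.comb ![l, 1 - l] ![u, v]) u = (1 - l) * dist u v ∧
      dist (S.comb ![l, 1 - l] ![u, v]) v = l * dist u v := by
  obtain ⟨hl0, hl1⟩ := hl
  have hpos := vec2_pos hl0 (sub_pos.2 hl1)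
  have hsum := vec2_sum_eq_one (add_sub_cancel l 1)
  have hdist_u : dist (S.comb ![l, 1 - l] ![u, v]) u ≤ (1 - l) * dist u v := by
    simpa [Fin.sum_univ_two, S.comb_pair_self_of_mem_KX hu ⟨hl0, hl1⟩, dist_comm v u] using
      S.comb_nc _ ![u, v] ![u, u] hpos hsum
  have hdist_v : dist (S.comb ![l, 1 - l] ![u, v]) v ≤ l * dist u v := by
    simpa [Fin.sum_univ_two, S.comb_pair_self_of_mem_KX hv ⟨hl0, hl1⟩] using
      S.comb_nc _ ![u, v] ![v, v] hpos hsum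
  have htri := dist_triangle_left u v (S.comb ![l, 1 - l] ![u, v])
  constructor <;> linarith
end

section
/- (Metric cancellation law) In a convex combination space, for any x, y, z in the convexifiable domain K(X) and λ ∈ [0,1], d([λ,x;1−λ,y], [λ,x;1−λ,z]) = (1−λ)·d(y,z). In particular, if [λ,x;1−λ,y] = [λ,x;1−λ,z] for some λ ∈ [0,1), then y = z. -/
open scoped BigOperators
open Filter MeasureTheory

/-!
On `K(X)` every point `u` is idempotent, `[t, u; 1 - t, u] = u`. Indeed the uniform means
`[n⁻¹, u]ᵢ₌₁ⁿ` are the iterated binary combinations `iterMean u n`, and these split as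
`iterMean u (k + j) = [j / (k + j), iterMean u j; k / (k + j), iterMean u k]`; scaling `k` and `j`
by `m → ∞` and using `iterMean u n → K u = u` gives idempotence at rational weights, and continuity
in the weight gives it everywhere.

Idempotence of `y` and `z` lets one walk from `y` to `z` through `[1 - k/m, y; k/m, z]`, where
consecutive points differ only in that a `1/m` share of `y` is replaced by `z`. After mixing `x` in
with weight `l / D`, `D = m (1 - l) + l`, that share regroups with `x` into
`[l, x; 1 - l, y]` resp. `[l, x; 1 - l, z]` with weight `1 / D`, so by negative curvature each of the
`m` steps moves by at most `δ / D`, `δ = d([l, x; 1 - l, y], [l, x; 1 - l, z])`. Together with the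
two end steps of length `O(1 / m)` this gives `D d(y, z) ≤ l (d(x, y) + d(x, z)) + m δ`, and letting
`m → ∞` yields `(1 - l) d(y, z) ≤ δ`; the reverse inequality is negative curvature.
-/

namespace CCSpace

open Set Filter Topology

variable {X : Type} [MetricSpace X] (S : CCSpace X)

@[simp] theorem comb2_zero (x y : X) : S.comb2 0 x y = y := by simp [comb2]

@[simp] theorem comb2_one (x y : X) : S.comb2 1 x y = x := by simp [comb2]

theorem comb2_of_mem_Ioo {t : ℝ} (ht : t ∈ Ioo 0 1) (x y : X) :
    S.comb2 t x y = S.comb ![t, 1 - t] ![x, y] := by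
  rw [comb2, if_neg ht.1.ne', if_neg ht.2.ne]

theorem weights_two_pos {t : ℝ} (ht : t ∈ Ioo 0 1) : ∀ i, 0 < (![t, 1 - t] : Fin 2 → ℝ) i := by
  intro i; fin_cases i <;> simp [ht.1, ht.2]

theorem comb2_comm {t : ℝ} (ht : t ∈ Icc 0 1) (x y : X) :
    S.comb2 t x y = S.comb2 (1 - t) y x := by
  rcases eq_endpoints_or_mem_Ioo_of_mem_Icc ht with rfl | rfl | ht
  · simp
  · simp
  have ht' : 1 - t ∈ Ioo 0 1 := ⟨by linarith [ht.2], by linarith [ht.1]⟩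
  rw [comb2_of_mem_Ioo S ht, comb2_of_mem_Ioo S ht',
    S.comb_perm _ _ (Equiv.swap 0 1) (weights_two_pos ht) (by simp)]
  congr 1 <;> funext i <;> fin_cases i <;> simp

theorem dist_comb2_le {t : ℝ} (ht : t ∈ Icc 0 1) (x y x' y' : X) :
    dist (S.comb2 t x y) (S.comb2 t x' y') ≤ t * dist x x' + (1 - t) * dist y y' := by
  rcases eq_endpoints_or_mem_Ioo_of_mem_Icc ht with rfl | rfl | ht
  · simp
  · simp
  simpa [comb2_of_mem_Ioo S ht] using S.comb_nc _ ![x, y] ![x', y'] (weights_two_pos ht) (by simp)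

theorem weights_three_pos {w₀ w₁ w₂ : ℝ} (h₀ : 0 < w₀) (h₁ : 0 < w₁) (h₂ : 0 < w₂) :
    ∀ i, 0 < (![w₀, w₁, w₂] : Fin 3 → ℝ) i := by
  intro i; fin_cases i <;> assumption

theorem comb_three {w₀ w₁ w₂ : ℝ} (h₀ : 0 < w₀) (h₁ : 0 < w₁) (h₂ : 0 < w₂)
    (hw : w₀ + w₁ + w₂ = 1) (x y z : X) :
    S.comb ![w₀, w₁, w₂] ![x, y, z] = S.comb2 w₀ x (S.comb2 (w₁ / (w₁ + w₂)) y z) := by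
  have hw₀ : w₀ ∈ Ioo 0 1 := ⟨h₀, by linarith⟩
  have hw₁ : w₁ / (w₁ + w₂) ∈ Ioo 0 1 :=
    ⟨by positivity, (div_lt_one (by positivity)).2 (by linarith)⟩
  rw [S.comb_assoc (n := 1) _ _ (weights_three_pos h₀ h₁ h₂) (by simp [Fin.sum_univ_three, hw]),
    comb2_of_mem_Ioo S hw₀, comb2_of_mem_Ioo S hw₁]
  congr 1 <;> funext i <;> fin_cases i
  · rfl
  · show w₁ + w₂ = 1 - w₀
    linarith
  · rfl
  · show S.comb ![w₁ / (w₁ + w₂), w₂ / (w₁ + w₂)] ![y, z] = _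
    congr 1
    funext j; fin_cases j
    · rfl
    · show w₂ / (w₁ + w₂) = 1 - w₁ / (w₁ + w₂)
      field_simp
      ring

theorem comb_three_rotate_s1 {w₀ w₁ w₂ : ℝ} (h₀ : 0 < w₀) (h₁ : 0 < w₁) (h₂ : 0 < w₂)
    (hw : w₀ + w₁ + w₂ = 1) (x y z : X) :
    S.comb ![w₀, w₁, w₂] ![x, y, z] = S.comb ![w₂, w₀, w₁] ![z, x, y] := by
  rw [S.comb_perm _ _ (finRotate 3).symm (weights_three_pos h₀ h₁ h₂)
    (by simp [Fin.sum_univ_three, hw])]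
  congr 1 <;> funext i <;> fin_cases i <;> rfl

theorem comb2_assoc {a b : ℝ} (ha : a ∈ Icc 0 1) (hb : b ∈ Icc 0 1) (x y z : X) :
    S.comb2 a x (S.comb2 b y z) =
      S.comb2 (a + (1 - a) * b) (S.comb2 (a / (a + (1 - a) * b)) x y) z := by
  rcases eq_endpoints_or_mem_Ioo_of_mem_Icc ha with rfl | rfl | ha
  · simp
  · simp
  rcases eq_endpoints_or_mem_Ioo_of_mem_Icc hb with rfl | rfl | hb
  · simp [ha.1.ne']
  · simp
  have h₀ := ha.1
  have h₁ : 0 < (1 - a) * b := mul_pos (by linarith [ha.2]) hb.1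
  have h₂ : 0 < (1 - a) * (1 - b) := mul_pos (by linarith [ha.2]) (by linarith [hb.2])
  calc S.comb2 a x (S.comb2 b y z)
      = S.comb ![a, (1 - a) * b, (1 - a) * (1 - b)] ![x, y, z] := by
        rw [comb_three S h₀ h₁ h₂ (by ring)]
        congr 2
        field_simp [(by linarith [ha.2] : (1 - a) ≠ 0)]
        ring
    _ = S.comb ![(1 - a) * (1 - b), a, (1 - a) * b] ![z, x, y] :=
        comb_three_rotate_s1 S h₀ h₁ h₂ (by ring) x y z
    _ = S.comb2 ((1 - a) * (1 - b)) z (S.comb2 (a / (a + (1 - a) * b)) x y) :=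
        comb_three S h₂ h₀ h₁ (by ring) z x y
    _ = _ := by
        rw [comb2_comm S ⟨h₂.le, by nlinarith [ha.1, hb.1]⟩]
        congr 1
        ring

theorem comb_snoc_snoc {n : ℕ} {w : Fin n → ℝ} {a b : ℝ} (hw : ∀ i, 0 < w i) (ha : 0 < a)
    (hb : 0 < b) (hsum : ∑ i, w i + a + b = 1) (p : Fin n → X) (x y : X) :
    S.comb (Fin.snoc (Fin.snoc w a) b) (Fin.snoc (Fin.snoc p x) y) =
      S.comb (Fin.snoc w (a + b)) (Fin.snoc p (S.comb2 (a / (a + b)) x y)) := by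
  have hpos : ∀ i, 0 < (Fin.snoc (Fin.snoc w a) b : Fin (n + 2) → ℝ) i := by
    intro i
    refine Fin.lastCases (by simpa) (fun i => ?_) i
    refine Fin.lastCases (by simpa) (fun i => by simpa using hw i) i
  have hmem : a / (a + b) ∈ Ioo 0 1 := ⟨by positivity, (div_lt_one (by positivity)).2 (by linarith)⟩
  rw [S.comb_assoc _ _ hpos (by simpa [Fin.sum_univ_castSucc] using hsum), comb2_of_mem_Ioo S hmem]
  have hb' : b / (a + b) = 1 - a / (a + b) := by field_simp; ring
  congr 1 <;> funext i <;> refine Fin.lastCases ?_ (fun i => ?_) i <;>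
    simp [Fin.snoc, Fin.castLT, hb']

noncomputable def iterMean (u : X) : ℕ → X
  | 0 => u
  | n + 1 => S.comb2 (1 / ((n : ℝ) + 1)) u (iterMean u n)

@[simp] theorem iterMean_zero (u : X) : S.iterMean u 0 = u := rfl

theorem iterMean_succ (u : X) (n : ℕ) :
    S.iterMean u (n + 1) = S.comb2 (1 / ((n : ℝ) + 1)) u (S.iterMean u n) := rfl

theorem comb_snoc_const_eq_iterMean (u : X) (t i : ℕ) {e : ℝ} (he : ((t : ℝ) + i + 1) * e = 1) :
    S.comb (Fin.snoc (fun _ : Fin t => e) ((i + 1) * e))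
      (Fin.snoc (fun _ : Fin t => u) (S.iterMean u (i + 1))) = S.iterMean u (t + i + 1) := by
  have snoc_self : ∀ {α : Type} (a : α) (n : ℕ), Fin.snoc (fun _ : Fin n => a) a = fun _ => a :=
    fun a n => funext fun j => Fin.lastCases (by simp) (fun j => by simp) j
  induction t generalizing i with
  | zero =>
    simp only [Nat.cast_zero, zero_add] at he
    conv_rhs => rw [zero_add, ← S.comb_single (S.iterMean u (i + 1))]
    congr 1
    funext j
    simp [Fin.snoc, he]
  | succ t ih =>
    push_cast at he
    have he₀ : 0 < e := pos_of_mul_pos_right (he ▸ one_pos) (by positivity)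
    rw [← snoc_self e t, ← snoc_self u t, S.comb_snoc_snoc (fun _ => he₀) he₀ (by positivity)
        (by rw [Fin.sum_const, nsmul_eq_mul]; linarith),
      show t + 1 + i + 1 = t + (i + 1) + 1 by ring, ← ih (i + 1) (by push_cast; linarith),
      iterMean_succ S u (i + 1)]
    congr 3
    · push_cast; ring
    · push_cast; field_simp; ring

theorem comb_const_eq_iterMean {n : ℕ} (hn : 0 < n) (u : X) :
    S.comb (fun _ : Fin n => (n : ℝ)⁻¹) (fun _ => u) = S.iterMean u n := by
  obtain ⟨t, rfl⟩ : ∃ t, n = t + 1 := ⟨n - 1, by omega⟩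
  have h := S.comb_snoc_const_eq_iterMean u t 0 (e := ((t : ℝ) + 1)⁻¹)
    (by rw [Nat.cast_zero, add_zero]; exact mul_inv_cancel₀ (by positivity))
  rw [add_zero, iterMean_succ, iterMean_zero, Nat.cast_zero, zero_add, div_one, comb2_one] at h
  convert h using 2 <;> funext j <;> refine Fin.lastCases ?_ (fun j => ?_) j <;> simp

theorem tendsto_iterMean {u : X} (hu : u ∈ S.KX) :
    Tendsto (S.iterMean u) atTop (𝓝 u) := by
  have h := S.tendsto_K u
  rw [hu] at h
  refine h.congr' ?_
  filter_upwards [eventually_gt_atTop 0] with n hn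
  exact S.comb_const_eq_iterMean hn u

theorem iterMean_add (u : X) (k j : ℕ) :
    S.iterMean u (k + j) = S.comb2 (j / (k + j)) (S.iterMean u j) (S.iterMean u k) := by
  induction j with
  | zero => simp
  | succ j ih =>
    have hk : (0 : ℝ) ≤ k := k.cast_nonneg
    have ha : 1 / ((k : ℝ) + j + 1) ∈ Icc 0 1 :=
      ⟨by positivity, (div_le_one (by positivity)).2 (by linarith)⟩
    have hb : (j : ℝ) / (k + j) ∈ Icc 0 1 :=
      ⟨by positivity, div_le_one_of_le₀ (by linarith) (by positivity)⟩
    have hab : (1 - 1 / ((k : ℝ) + j + 1)) * (j / (k + j)) = j / (k + j + 1) := by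
      rcases eq_or_ne ((k : ℝ) + j) 0 with h | h
      · have : (j : ℝ) = 0 := by linarith [(j.cast_nonneg : (0:ℝ) ≤ j)]
        simp [this]
      · field_simp
        ring
    rw [← add_assoc, iterMean_succ, ih, Nat.cast_add, Nat.cast_add, ← add_assoc,
      comb2_assoc S ha hb, hab, iterMean_succ]
    congr 2
    · push_cast; field_simp; ring
    · field_simp
      ring

theorem lipschitzWith_comb2 {t : ℝ} (ht : t ∈ Icc 0 1) :
    LipschitzWith 1 (fun p : X × X => S.comb2 t p.1 p.2) := by
  refine LipschitzWith.of_dist_le_mul fun p q => ?_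
  have h₁ : dist p.1 q.1 ≤ dist p q := by simp [Prod.dist_eq]
  have h₂ : dist p.2 q.2 ≤ dist p q := by simp [Prod.dist_eq]
  calc dist (S.comb2 t p.1 p.2) (S.comb2 t q.1 q.2)
      ≤ t * dist p.1 q.1 + (1 - t) * dist p.2 q.2 := S.dist_comb2_le ht _ _ _ _
    _ ≤ t * dist p q + (1 - t) * dist p q := by
        have := ht.1
        have : 0 ≤ 1 - t := by linarith [ht.2]
        gcongr
    _ = _ := by rw [NNReal.coe_one]; ring

theorem tendsto_iterMean_mul {u : X} (hu : u ∈ S.KX) (p : ℕ) :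
    Tendsto (fun m : ℕ => S.iterMean u (m * p)) atTop (𝓝 u) := by
  rcases Nat.eq_zero_or_pos p with rfl | hp
  · simp
  · exact (S.tendsto_iterMean hu).comp
      (tendsto_atTop_mono (fun m => Nat.le_mul_of_pos_right m hp) tendsto_id)

theorem comb2_self_natCast_div {u : X} (hu : u ∈ S.KX) (k j : ℕ) :
    S.comb2 (j / (k + j)) u u = u := by
  have hw : (j : ℝ) / (k + j) ∈ Icc 0 1 :=
    ⟨by positivity, div_le_one_of_le₀ (by linarith [(k.cast_nonneg : (0:ℝ) ≤ k)]) (by positivity)⟩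
  have hsplit : ∀ m : ℕ, 0 < m → S.iterMean u (m * k + m * j) =
      S.comb2 (j / (k + j)) (S.iterMean u (m * j)) (S.iterMean u (m * k)) := by
    intro m hm
    rw [iterMean_add]
    congr 1
    push_cast
    rw [← mul_add, mul_div_mul_left _ _ (by positivity)]
  have hlim : Tendsto (fun m : ℕ => S.iterMean u (m * k + m * j)) atTop
      (𝓝 (S.comb2 (j / (k + j)) u u)) := by
    refine Tendsto.congr' (eventually_gt_atTop 0 |>.mono fun m hm => (hsplit m hm).symm) ?_
    exact ((S.lipschitzWith_comb2 hw).continuous.tendsto (u, u)).comp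
      ((S.tendsto_iterMean_mul hu j).prodMk_nhds (S.tendsto_iterMean_mul hu k))
  refine tendsto_nhds_unique hlim ?_
  simpa only [← mul_add] using S.tendsto_iterMean_mul hu (k + j)

theorem comb2_self {u : X} (hu : u ∈ S.KX) {t : ℝ} (ht : t ∈ Icc 0 1) : S.comb2 t u u = u := by
  rcases eq_endpoints_or_mem_Ioo_of_mem_Icc ht with rfl | rfl | ht
  · simp
  · simp
  suffices EqOn (fun t => S.comb ![t, 1 - t] ![u, u]) (fun _ => u) (Ioo 0 1) by
    rw [comb2_of_mem_Ioo S ht]; exact this ht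
  refine EqOn.of_subset_closure ?_ (S.comb_cont u u) continuousOn_const inter_subset_left
    (Rat.denseRange_cast.open_subset_closure_inter isOpen_Ioo)
  rintro _ ⟨hq, q, rfl⟩
  have hq₀ : 0 ≤ q.num := Rat.num_nonneg.2 (by exact_mod_cast hq.1.le)
  have hq₁ : q.num.toNat ≤ q.den := by
    have : q.num ≤ q.den := Rat.num_le_denom_iff.2 (by exact_mod_cast hq.2.le)
    omega
  have hnum : ((q.num.toNat : ℕ) : ℝ) = q.num := by exact_mod_cast Int.toNat_of_nonneg hq₀
  have hcast : (q : ℝ) = (q.num.toNat : ℕ) / ((q.den - q.num.toNat : ℕ) + (q.num.toNat : ℕ)) := by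
    rw [← Nat.cast_add, Nat.sub_add_cancel hq₁, Rat.cast_def, hnum]
  show S.comb ![(q : ℝ), 1 - q] ![u, u] = u
  rw [← comb2_of_mem_Ioo S hq, hcast]
  exact S.comb2_self_natCast_div hu _ _

theorem add_one_sub_mul_mem_Icc {a b : ℝ} (ha : a ∈ Icc 0 1) (hb : b ∈ Icc 0 1) :
    a + (1 - a) * b ∈ Icc 0 1 :=
  ⟨by nlinarith [ha.1, ha.2, hb.1], by nlinarith [ha.1, ha.2, hb.2]⟩

theorem comb2_absorb_left {y : X} (hy : y ∈ S.KX) {a b : ℝ} (ha : a ∈ Icc 0 1)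
    (hb : b ∈ Icc 0 1) (z : X) :
    S.comb2 a y (S.comb2 b y z) = S.comb2 (a + (1 - a) * b) y z := by
  have hs := add_one_sub_mul_mem_Icc ha hb
  rw [comb2_assoc S ha hb, S.comb2_self hy ⟨div_nonneg ha.1 hs.1,
    div_le_one_of_le₀ (by nlinarith [ha.2, hb.1]) hs.1⟩]

theorem comb2_absorb_right {z : X} (hz : z ∈ S.KX) {a b : ℝ} (ha : a ∈ Icc 0 1)
    (hb : b ∈ Icc 0 1) (y : X) :
    S.comb2 a z (S.comb2 b y z) = S.comb2 ((1 - a) * b) y z := by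
  have hb' : 1 - b ∈ Icc 0 1 := ⟨by linarith [hb.2], by linarith [hb.1]⟩
  rw [comb2_comm S hb, S.comb2_absorb_left hz ha hb',
    comb2_comm S (add_one_sub_mul_mem_Icc ha hb')]
  ring_nf

theorem dist_comb2_nested_le {μ r : ℝ} (hμ : μ ∈ Icc 0 1) (hr : r ∈ Icc 0 1) (x y z w : X) :
    dist (S.comb2 μ x (S.comb2 r y w)) (S.comb2 μ x (S.comb2 r z w)) ≤
      (μ + (1 - μ) * r) * dist (S.comb2 (μ / (μ + (1 - μ) * r)) x y)
        (S.comb2 (μ / (μ + (1 - μ) * r)) x z) := by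
  rw [comb2_assoc S hμ hr, comb2_assoc S hμ hr]
  simpa using S.dist_comb2_le (add_one_sub_mul_mem_Icc hμ hr) _ w _ w

theorem exists_comb2_step {y z : X} (hy : y ∈ S.KX) (hz : z ∈ S.KX) {m k : ℕ} (hm : 2 ≤ m)
    (hk : k < m) :
    ∃ w, S.comb2 (1 - k / m) y z = S.comb2 (1 / m) y w ∧
      S.comb2 (1 - (k + 1) / m) y z = S.comb2 (1 / m) z w := by
  have hm' : (2 : ℝ) ≤ m := by exact_mod_cast hm
  have hk' : (k : ℝ) + 1 ≤ m := by exact_mod_cast hk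
  have ha : 1 / (m : ℝ) ∈ Icc 0 1 := ⟨by positivity, (div_le_one (by linarith)).2 (by linarith)⟩
  have hb : 1 - k / ((m : ℝ) - 1) ∈ Icc 0 1 :=
    ⟨by rw [sub_nonneg, div_le_one (by linarith)]; linarith, by
      have : 0 ≤ (k : ℝ) / (m - 1) := div_nonneg k.cast_nonneg (by linarith)
      linarith⟩
  refine ⟨S.comb2 (1 - k / (m - 1)) y z, ?_, ?_⟩
  · rw [S.comb2_absorb_left hy ha hb]
    congr 1
    field_simp [(by linarith : (m : ℝ) - 1 ≠ 0)]
    ring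
  · rw [S.comb2_absorb_right hz ha hb]
    congr 1
    field_simp [(by linarith : (m : ℝ) - 1 ≠ 0)]
    ring

theorem mul_dist_le_add_mul_dist_comb2 {y z : X} (hy : y ∈ S.KX) (hz : z ∈ S.KX) {l : ℝ}
    (hl : l ∈ Icc 0 1) (x : X) {m : ℕ} (hm : 2 ≤ m) :
    (m * (1 - l) + l) * dist y z ≤
      l * (dist x y + dist x z) + m * dist (S.comb2 l x y) (S.comb2 l x z) := by
  have hm' : (2 : ℝ) ≤ m := by exact_mod_cast hm
  set D : ℝ := m * (1 - l) + l with hD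
  have hD₁ : 1 ≤ D := by nlinarith [hl.1, hl.2]
  set μ : ℝ := l / D with hμ
  have hμI : μ ∈ Icc 0 1 :=
    ⟨div_nonneg hl.1 (by linarith), div_le_one_of_le₀ (by linarith [hl.2]) (by linarith)⟩
  have hr : 1 / (m : ℝ) ∈ Icc 0 1 := ⟨by positivity, (div_le_one (by linarith)).2 (by linarith)⟩
  have hs : μ + (1 - μ) * (1 / m) = 1 / D := by
    rw [hμ]; field_simp; rw [hD]; ring
  have hμs : μ / (μ + (1 - μ) * (1 / m)) = l := by
    rw [hs, hμ]; field_simp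
  set δ := dist (S.comb2 l x y) (S.comb2 l x z)
  let W : ℕ → X := fun k => S.comb2 μ x (S.comb2 (1 - k / m) y z)
  have hstep : ∀ {k}, k < m → dist (W k) (W (k + 1)) ≤ 1 / D * δ := by
    intro k hk
    obtain ⟨w, hyw, hzw⟩ := S.exists_comb2_step hy hz hm hk
    have h := S.dist_comb2_nested_le hμI hr x y z w
    rw [hμs, hs] at h
    simpa only [W, hyw, Nat.cast_add, Nat.cast_one, hzw] using h
  have hchain : dist (S.comb2 μ x y) (S.comb2 μ x z) ≤ m * (1 / D * δ) := by
    have h := dist_le_range_sum_of_dist_le m hstep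
    simp only [W, Finset.sum_const, Finset.card_range, nsmul_eq_mul] at h
    simpa [(by positivity : (m : ℝ) ≠ 0)] using h
  have hend : ∀ v ∈ S.KX, dist v (S.comb2 μ x v) ≤ μ * dist x v := by
    intro v hv
    have h := S.dist_comb2_le hμI v v x v
    rw [S.comb2_self hv hμI, dist_self, mul_zero, add_zero, dist_comm v x] at h
    exact h
  have hyz := dist_triangle4 y (S.comb2 μ x y) (S.comb2 μ x z) z
  rw [dist_comm (S.comb2 μ x z) z] at hyz
  have hyz' : dist y z ≤ μ * (dist x y + dist x z) + m * (1 / D * δ) := by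
    linarith [hend y hy, hend z hz]
  calc D * dist y z ≤ D * (μ * (dist x y + dist x z) + m * (1 / D * δ)) := by
        gcongr
    _ = _ := by rw [hμ]; field_simp

theorem dist_comb2_comb2_of_mem_KX {y z : X} (hy : y ∈ S.KX) (hz : z ∈ S.KX) {l : ℝ}
    (hl : l ∈ Icc 0 1) (x : X) :
    dist (S.comb2 l x y) (S.comb2 l x z) = (1 - l) * dist y z := by
  refine le_antisymm (by simpa using S.dist_comb2_le hl x y x z) (not_lt.1 fun hlt => ?_)
  set ε := (1 - l) * dist y z - dist (S.comb2 l x y) (S.comb2 l x z)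
  have hε : 0 < ε := sub_pos.2 hlt
  obtain ⟨m, hm⟩ := exists_nat_gt (l * (dist x y + dist x z) / ε)
  have h := S.mul_dist_le_add_mul_dist_comb2 hy hz hl x (by omega : 2 ≤ m + 2)
  rw [div_lt_iff₀ hε] at hm
  have : 0 ≤ l * dist y z := mul_nonneg hl.1 dist_nonneg
  push_cast at h
  nlinarith

end CCSpace

theorem stmt1_general {X : Type} [MetricSpace X] (S : CCSpace X) (x y z : X)
    (hy : y ∈ S.KX) (hz : z ∈ S.KX) (l : ℝ)
    (hl : l ∈ Set.Icc (0 : ℝ) 1) :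
    dist (S.comb2 l x y) (S.comb2 l x z) = (1 - l) * dist y z ∧
      (l < 1 → S.comb2 l x y = S.comb2 l x z → y = z) := by
  have h := S.dist_comb2_comb2_of_mem_KX hy hz hl x
  refine ⟨h, fun hl₁ heq => dist_eq_zero.1 ?_⟩
  rw [heq, dist_self] at h
  exact (mul_eq_zero.1 h.symm).resolve_left (by linarith)

/-- Metric cancellation law in the convexifiable domain, and the resulting
algebraic cancellation law. -/
theorem stmt1 {X : Type} [MetricSpace X] (S : CCSpace X) (x y z : X)
    (hx : x ∈ S.KX) (hy : y ∈ S.KX) (hz : z ∈ S.KX) (l : ℝ)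
    (hl : l ∈ Set.Icc (0 : ℝ) 1) :
    dist (S.comb2 l x y) (S.comb2 l x z) = (1 - l) * dist y z ∧
      (l < 1 → S.comb2 l x y = S.comb2 l x z → y = z) :=
  stmt1_general S x y z hy hz l hl
end

section
/- In a convex combination space, if (x,y,z,t) are points of the convexifiable domain K(X) forming a parallelogram, i.e. the midpoints satisfy m(x,z) = m(y,t) where m(a,b) := [1/2,a;1/2,b], then d(x,y) = d(t,z). -/
open scoped BigOperators
open Filter MeasureTheory

section ParAux
variable {X : Type} [MetricSpace X] (S : CCSpace X)

/-- `1/(N+2)` -/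
noncomputable def cN (N : ℕ) : ℝ := ((N+2 : ℕ) : ℝ)⁻¹

/-- uniform weights on `N+2` points -/
noncomputable def WU (N : ℕ) : Fin (N+2) → ℝ := fun _ => cN N

/-- merged weights on `N+1` points -/
noncomputable def W2' (N : ℕ) : Fin (N+1) → ℝ :=
  Fin.snoc (fun _ : Fin N => cN N) (cN N + cN N)

lemma cN_pos (N : ℕ) : 0 < cN N := by
  have : (0:ℝ) < ((N+2:ℕ):ℝ) := by positivity
  exact inv_pos.mpr this

lemma WU_pos (N : ℕ) : ∀ i, 0 < WU N i := fun _ => cN_pos N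

lemma WU_sum (N : ℕ) : (∑ i, WU N i) = 1 := by
  simp only [WU, Finset.sum_const, Finset.card_univ, Fintype.card_fin, nsmul_eq_mul]
  rw [cN]
  rw [mul_inv_cancel₀]
  positivity

lemma W2'_pos (N : ℕ) : ∀ i, 0 < W2' N i := by
  intro i
  induction i using Fin.lastCases with
  | last => simp only [W2', Fin.snoc_last]; have := cN_pos N; linarith
  | cast j => simp only [W2', Fin.snoc_castSucc]; exact cN_pos N

lemma W2'_sum (N : ℕ) : (∑ i, W2' N i) = 1 := by
  rw [Fin.sum_univ_castSucc]
  simp only [W2', Fin.snoc_castSucc, Fin.snoc_last, Finset.sum_const,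
    Finset.card_univ, Fintype.card_fin, nsmul_eq_mul]
  have h := WU_sum N
  simp only [WU, Finset.sum_const, Finset.card_univ, Fintype.card_fin,
    nsmul_eq_mul] at h
  push_cast at h ⊢
  linarith

lemma half_pos' : ∀ i : Fin 2, (0:ℝ) < ![(1:ℝ)/2, 1/2] i := by
  intro i; fin_cases i <;> norm_num

lemma half_sum' : (∑ i : Fin 2, ![(1:ℝ)/2, 1/2] i) = 1 := by
  rw [Fin.sum_univ_two]
  norm_num

lemma half_vec {c : ℝ} (hc : c ≠ 0) :
    ![c/(c+c), c/(c+c)] = ![(1:ℝ)/2, 1/2] := by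
  have h2 : c + c ≠ 0 := by
    intro h; apply hc; linarith [h]
  have h : c/(c+c) = 1/2 := by
    rw [div_eq_iff h2]; ring
  funext i; fin_cases i <;> simp [h]

lemma comb_two_swap (p q : X) :
    S.comb ![(1:ℝ)/2, 1/2] ![p, q] = S.comb ![(1:ℝ)/2, 1/2] ![q, p] := by
  rw [S.comb_perm ![(1:ℝ)/2, 1/2] ![p, q] (Equiv.swap 0 1) half_pos' half_sum']
  congr 1
  · funext i; fin_cases i <;> simp [Equiv.swap_apply_def]
  · funext i; fin_cases i <;> simp [Equiv.swap_apply_def]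

lemma assoc_unif (N : ℕ) (u : Fin (N+2) → X) :
    S.comb (WU N) u =
      S.comb (W2' N)
        (Fin.snoc (fun i : Fin N => u (Fin.castLE (by omega) i))
          (S.comb ![(1:ℝ)/2, 1/2] ![u ⟨N, by omega⟩, u ⟨N+1, by omega⟩])) := by
  rw [S.comb_assoc (WU N) u (WU_pos N) (WU_sum N)]
  simp only [WU]
  rw [half_vec (ne_of_gt (cN_pos N))]
  rfl

end ParAux

section ParStep
variable {X : Type} [MetricSpace X] (S : CCSpace X)

/-- the chain points: `a` copies of `x`, then `y`s, then `z`, `t`. -/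
def Upts (x y z t : X) (N a : ℕ) : Fin (N+2) → X := fun i =>
  if (i:ℕ) < a then x else if (i:ℕ) < N then y else if (i:ℕ) = N then z else t

/-- auxiliary arrangement with the pair `(z,x)` in the last two slots -/
def Vpts (x y z t : X) (N a : ℕ) : Fin (N+2) → X := fun i =>
  if (i:ℕ) < a then x else if (i:ℕ) = a then t
  else if (i:ℕ) < N then y else if (i:ℕ) = N then z else x

/-- auxiliary arrangement with the pair `(y,t)` in the last two slots -/
def Rpts (x y z t : X) (N a : ℕ) : Fin (N+2) → X := fun i =>
  if (i:ℕ) < a then x else if (i:ℕ) = a then z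
  else if (i:ℕ) < N then y else if (i:ℕ) = N then y else t

/-- front of length `N`: `x`s, one special `w` at slot `a`, then `y`s -/
def Ff (x w y : X) (N a : ℕ) : Fin N → X := fun j =>
  if (j:ℕ) < a then x else if (j:ℕ) = a then w else y

lemma step_eq1 (x y z t : X) (N a : ℕ) (ha : a < N) :
    S.comb (WU N) (Upts x y z t N (a+1)) = S.comb (WU N) (Vpts x y z t N a) := by
  rw [S.comb_perm (WU N) (Upts x y z t N (a+1))
    (Equiv.swap ⟨a, by omega⟩ ⟨N+1, by omega⟩) (WU_pos N) (WU_sum N)]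
  congr 1
  funext i
  simp only [Function.comp_apply]
  rcases eq_or_ne i ⟨a, by omega⟩ with rfl | hia
  · rw [Equiv.swap_apply_left]
    simp only [Upts, Vpts, Fin.val_mk]
    split_ifs <;> first | rfl | omega
  rcases eq_or_ne i ⟨N+1, by omega⟩ with rfl | hib
  · rw [Equiv.swap_apply_right]
    simp only [Upts, Vpts, Fin.val_mk]
    split_ifs <;> first | rfl | omega
  · rw [Equiv.swap_apply_of_ne_of_ne hia hib]
    have h1 : (i:ℕ) ≠ a := fun h => hia (Fin.ext h)
    have h2 : (i:ℕ) ≠ N+1 := fun h => hib (Fin.ext h)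
    simp only [Upts, Vpts, Fin.val_mk]
    split_ifs <;> first | rfl | omega

lemma step_eq2 (x y z t : X)
    (hpar : S.comb ![(1:ℝ)/2, 1/2] ![x, z] = S.comb ![(1:ℝ)/2, 1/2] ![y, t])
    (N a : ℕ) (ha : a < N) :
    S.comb (WU N) (Vpts x y z t N a) =
      S.comb (W2' N)
        (Fin.snoc (Ff x t y N a) (S.comb ![(1:ℝ)/2, 1/2] ![y, t])) := by
  rw [assoc_unif]
  congr 1
  have hfront : (fun i : Fin N => Vpts x y z t N a (Fin.castLE (by omega) i))
      = Ff x t y N a := by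
    funext j
    have hj := j.isLt
    simp only [Vpts, Ff, Fin.coe_castLE, Fin.val_mk]
    split_ifs <;> first | rfl | omega
  have hN : Vpts x y z t N a ⟨N, by omega⟩ = z := by
    simp only [Vpts, Fin.val_mk]; split_ifs <;> first | rfl | omega
  have hN1 : Vpts x y z t N a ⟨N+1, by omega⟩ = x := by
    simp only [Vpts, Fin.val_mk]; split_ifs <;> first | rfl | omega
  rw [hfront, hN, hN1, comb_two_swap, hpar]

lemma step_eq4 (x y z t : X) (N a : ℕ) (ha : a < N) :
    S.comb (W2' N)
        (Fin.snoc (Ff x z y N a) (S.comb ![(1:ℝ)/2, 1/2] ![y, t])) =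
      S.comb (WU N) (Rpts x y z t N a) := by
  rw [assoc_unif]
  congr 1
  have hfront : (fun i : Fin N => Rpts x y z t N a (Fin.castLE (by omega) i))
      = Ff x z y N a := by
    funext j
    have hj := j.isLt
    simp only [Rpts, Ff, Fin.coe_castLE, Fin.val_mk]
    split_ifs <;> first | rfl | omega
  have hN : Rpts x y z t N a ⟨N, by omega⟩ = y := by
    simp only [Rpts, Fin.val_mk]; split_ifs <;> first | rfl | omega
  have hN1 : Rpts x y z t N a ⟨N+1, by omega⟩ = t := by
    simp only [Rpts, Fin.val_mk]; split_ifs <;> first | rfl | omega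
  rw [hfront, hN, hN1]

lemma step_eq5 (x y z t : X) (N a : ℕ) (ha : a < N) :
    S.comb (WU N) (Rpts x y z t N a) = S.comb (WU N) (Upts x y z t N a) := by
  rw [S.comb_perm (WU N) (Rpts x y z t N a)
    (Equiv.swap ⟨a, by omega⟩ ⟨N, by omega⟩) (WU_pos N) (WU_sum N)]
  congr 1
  funext i
  simp only [Function.comp_apply]
  rcases eq_or_ne i ⟨a, by omega⟩ with rfl | hia
  · rw [Equiv.swap_apply_left]
    simp only [Rpts, Upts, Fin.val_mk]
    split_ifs <;> first | rfl | omega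
  rcases eq_or_ne i ⟨N, by omega⟩ with rfl | hib
  · rw [Equiv.swap_apply_right]
    simp only [Rpts, Upts, Fin.val_mk]
    split_ifs <;> first | rfl | omega
  · rw [Equiv.swap_apply_of_ne_of_ne hia hib]
    have h1 : (i:ℕ) ≠ a := fun h => hia (Fin.ext h)
    have h2 : (i:ℕ) ≠ N := fun h => hib (Fin.ext h)
    simp only [Rpts, Upts, Fin.val_mk]
    split_ifs <;> first | rfl | omega

lemma step_nc (x y z t : X) (N a : ℕ) (ha : a < N) :
    dist (S.comb (W2' N) (Fin.snoc (Ff x t y N a) (S.comb ![(1:ℝ)/2, 1/2] ![y, t])))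
         (S.comb (W2' N) (Fin.snoc (Ff x z y N a) (S.comb ![(1:ℝ)/2, 1/2] ![y, t])))
      ≤ cN N * dist t z := by
  refine (S.comb_nc (W2' N) _ _ (W2'_pos N) (W2'_sum N)).trans ?_
  rw [Fin.sum_univ_castSucc]
  simp only [Fin.snoc_castSucc, Fin.snoc_last, dist_self, mul_zero, add_zero]
  have hterm : ∀ j : Fin N, W2' N (Fin.castSucc j) * dist (Ff x t y N a j) (Ff x z y N a j)
      = if j = (⟨a, ha⟩ : Fin N) then cN N * dist t z else 0 := by
    intro j
    have hj := j.isLt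
    have hW : W2' N (Fin.castSucc j) = cN N := by
      simp only [W2', Fin.snoc_castSucc]
    rw [hW]
    rcases eq_or_ne j ⟨a, ha⟩ with rfl | hne
    · simp only [if_pos rfl, Ff]
      norm_num
    · rw [if_neg hne]
      have h1 : (j:ℕ) ≠ a := fun h => hne (Fin.ext h)
      have : Ff x t y N a j = Ff x z y N a j := by
        simp only [Ff, Fin.val_mk]; split_ifs <;> first | rfl | omega
      rw [this, dist_self, mul_zero]
  rw [Finset.sum_congr rfl (fun j _ => hterm j)]
  rw [Finset.sum_ite_eq' Finset.univ (⟨a, ha⟩ : Fin N) (fun _ => cN N * dist t z)]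
  simp

lemma step_le (x y z t : X)
    (hpar : S.comb ![(1:ℝ)/2, 1/2] ![x, z] = S.comb ![(1:ℝ)/2, 1/2] ![y, t])
    (N a : ℕ) (ha : a < N) :
    dist (S.comb (WU N) (Upts x y z t N (a+1))) (S.comb (WU N) (Upts x y z t N a))
      ≤ cN N * dist t z := by
  rw [step_eq1 S x y z t N a ha, step_eq2 S x y z t hpar N a ha,
    ← step_eq5 S x y z t N a ha, ← step_eq4 S x y z t N a ha]
  exact step_nc S x y z t N a ha

end ParStep

section ParMain
variable {X : Type} [MetricSpace X] (S : CCSpace X)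

lemma chain_le (x y z t : X)
    (hpar : S.comb ![(1:ℝ)/2, 1/2] ![x, z] = S.comb ![(1:ℝ)/2, 1/2] ![y, t])
    (N : ℕ) : ∀ a, a ≤ N →
    dist (S.comb (WU N) (Upts x y z t N a)) (S.comb (WU N) (Upts x y z t N 0))
      ≤ (a : ℝ) * (cN N * dist t z) := by
  intro a
  induction a with
  | zero => intro _; simp
  | succ a ih =>
    intro h
    have ha : a < N := by omega
    calc dist (S.comb (WU N) (Upts x y z t N (a+1))) (S.comb (WU N) (Upts x y z t N 0))
        ≤ dist (S.comb (WU N) (Upts x y z t N (a+1))) (S.comb (WU N) (Upts x y z t N a))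
          + dist (S.comb (WU N) (Upts x y z t N a)) (S.comb (WU N) (Upts x y z t N 0)) :=
          dist_triangle _ _ _
      _ ≤ cN N * dist t z + (a : ℝ) * (cN N * dist t z) := by
          exact add_le_add (step_le S x y z t hpar N a ha) (ih (by omega))
      _ = ((a+1 : ℕ) : ℝ) * (cN N * dist t z) := by push_cast; ring

lemma end_le (w z t : X) (N : ℕ) (v : Fin (N+2) → X)
    (hv : ∀ i : Fin (N+2), (i:ℕ) < N → v i = w)
    (hvN : ∀ i : Fin (N+2), (i:ℕ) = N → v i = z)
    (hvN1 : ∀ i : Fin (N+2), (i:ℕ) = N+1 → v i = t) :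
    dist (S.comb (WU N) (fun _ => w)) (S.comb (WU N) v)
      ≤ cN N * dist w z + cN N * dist w t := by
  refine (S.comb_nc (WU N) _ _ (WU_pos N) (WU_sum N)).trans ?_
  have hterm : ∀ i : Fin (N+2), WU N i * dist w (v i)
      = (if i = (⟨N, by omega⟩ : Fin (N+2)) then cN N * dist w z else 0)
        + (if i = (⟨N+1, by omega⟩ : Fin (N+2)) then cN N * dist w t else 0) := by
    intro i
    rcases lt_trichotomy (i:ℕ) N with hlt | heq | hgt
    · rw [hv i hlt, dist_self, if_neg, if_neg]
      · simp [WU]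
      · intro h; rw [h] at hlt; simp only [Fin.val_mk] at hlt; omega
      · intro h; rw [h] at hlt; simp only [Fin.val_mk] at hlt; omega
    · rw [hvN i heq, if_pos (Fin.ext heq), if_neg, add_zero]
      · simp [WU]
      · intro h; rw [h] at heq; simp only [Fin.val_mk] at heq; omega
    · have hi1 : (i:ℕ) = N+1 := by have := i.isLt; omega
      rw [hvN1 i hi1, if_neg, if_pos (Fin.ext hi1), zero_add]
      · simp [WU]
      · intro h; rw [h] at hi1; simp only [Fin.val_mk] at hi1; omega
  rw [Finset.sum_congr rfl (fun i _ => hterm i), Finset.sum_add_distrib,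
    Finset.sum_ite_eq' Finset.univ _ (fun _ => cN N * dist w z),
    Finset.sum_ite_eq' Finset.univ _ (fun _ => cN N * dist w t)]
  simp

lemma tendsto_unif (w : X) (hw : w ∈ S.KX) :
    Tendsto (fun N : ℕ => S.comb (WU N) (fun _ => w)) atTop (nhds w) := by
  have h := (S.tendsto_K w).comp (tendsto_add_atTop_nat 2)
  have hK : S.K w = w := hw
  rw [hK] at h
  exact h

lemma cN_tendsto : Tendsto (fun N : ℕ => cN N) atTop (nhds 0) := by
  exact tendsto_inv_atTop_zero.comp
    (tendsto_natCast_atTop_atTop.comp (tendsto_add_atTop_nat 2))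

lemma side_le (x y z t : X) (hx : x ∈ S.KX) (hy : y ∈ S.KX)
    (hpar : S.comb ![(1:ℝ)/2, 1/2] ![x, z] = S.comb ![(1:ℝ)/2, 1/2] ![y, t]) :
    dist x y ≤ dist t z := by
  set B : ℝ := dist x z + dist x t + dist y z + dist y t with hB
  have key : ∀ N : ℕ, dist x y ≤
      dist x (S.comb (WU N) (fun _ => x)) + cN N * B + dist t z
        + dist (S.comb (WU N) (fun _ => y)) y := by
    intro N
    have e1 : dist (S.comb (WU N) (fun _ => x)) (S.comb (WU N) (Upts x y z t N N))
        ≤ cN N * dist x z + cN N * dist x t := by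
      refine end_le S x z t N _ ?_ ?_ ?_ <;> intro i hi <;>
        simp only [Upts] <;> split_ifs <;> first | rfl | omega
    have e2 : dist (S.comb (WU N) (fun _ => y)) (S.comb (WU N) (Upts x y z t N 0))
        ≤ cN N * dist y z + cN N * dist y t := by
      refine end_le S y z t N _ ?_ ?_ ?_ <;> intro i hi <;>
        simp only [Upts] <;> split_ifs <;> first | rfl | omega
    have e3 : dist (S.comb (WU N) (Upts x y z t N N)) (S.comb (WU N) (Upts x y z t N 0))
        ≤ dist t z := by
      refine (chain_le S x y z t hpar N N le_rfl).trans ?_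
      have h1 : (N : ℝ) * cN N ≤ 1 := by
        rw [cN]
        rw [mul_inv_le_iff₀ (by positivity)]
        push_cast; linarith
      have h2 : (0:ℝ) ≤ dist t z := dist_nonneg
      calc (N:ℝ) * (cN N * dist t z) = ((N:ℝ) * cN N) * dist t z := by ring
        _ ≤ 1 * dist t z := by
            exact mul_le_mul_of_nonneg_right h1 h2
        _ = dist t z := one_mul _
    calc dist x y
        ≤ dist x (S.comb (WU N) (fun _ => x))
          + dist (S.comb (WU N) (fun _ => x)) (S.comb (WU N) (Upts x y z t N N))
          + dist (S.comb (WU N) (Upts x y z t N N)) (S.comb (WU N) (Upts x y z t N 0))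
          + dist (S.comb (WU N) (Upts x y z t N 0)) (S.comb (WU N) (fun _ => y))
          + dist (S.comb (WU N) (fun _ => y)) y := by
          have h1 := dist_triangle4 x (S.comb (WU N) (fun _ => x))
            (S.comb (WU N) (Upts x y z t N N)) (S.comb (WU N) (Upts x y z t N 0))
          have h2 := dist_triangle x (S.comb (WU N) (Upts x y z t N 0))
            (S.comb (WU N) (fun _ => y))
          have h3 := dist_triangle x (S.comb (WU N) (fun _ => y)) y
          linarith
      _ ≤ dist x (S.comb (WU N) (fun _ => x))
          + (cN N * dist x z + cN N * dist x t)
          + dist t z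
          + (cN N * dist y z + cN N * dist y t)
          + dist (S.comb (WU N) (fun _ => y)) y := by
          gcongr
          rw [dist_comm]
          exact e2
      _ = dist x (S.comb (WU N) (fun _ => x)) + cN N * B + dist t z
          + dist (S.comb (WU N) (fun _ => y)) y := by rw [hB]; ring
  have ht1 : Tendsto (fun N : ℕ => dist x (S.comb (WU N) (fun _ => x))) atTop (nhds 0) := by
    have := (tendsto_const_nhds (x := x) (f := atTop (α := ℕ))).dist (tendsto_unif S x hx)
    simpa using this
  have ht2 : Tendsto (fun N : ℕ => dist (S.comb (WU N) (fun _ => y)) y) atTop (nhds 0) := by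
    have := (tendsto_unif S y hy).dist (tendsto_const_nhds (x := y) (f := atTop (α := ℕ)))
    simpa using this
  have ht3 : Tendsto (fun N : ℕ => cN N * B) atTop (nhds 0) := by
    simpa using (cN_tendsto).mul_const B
  have hlim : Tendsto (fun N : ℕ =>
      dist x (S.comb (WU N) (fun _ => x)) + cN N * B + dist t z
        + dist (S.comb (WU N) (fun _ => y)) y) atTop (nhds (dist t z)) := by
    have := ((ht1.add ht3).add
      (tendsto_const_nhds (x := dist t z) (f := atTop (α := ℕ)))).add ht2
    simpa using this
  exact ge_of_tendsto' hlim key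

end ParMain

/-- If `(x,y,z,t)` in the convexifiable domain form a parallelogram
(`m(x,z) = m(y,t)` with `m` the midpoint), then `d(x,y) = d(t,z)`. -/
theorem stmt2 {X : Type} [MetricSpace X] (S : CCSpace X) (x y z t : X)
    (hx : x ∈ S.KX) (hy : y ∈ S.KX) (hz : z ∈ S.KX) (ht : t ∈ S.KX)
    (hpar : S.comb ![(1 : ℝ) / 2, 1 / 2] ![x, z] =
      S.comb ![(1 : ℝ) / 2, 1 / 2] ![y, t]) :
    dist x y = dist t z := by
  have hpar' : S.comb ![(1:ℝ)/2, 1/2] ![t, y] = S.comb ![(1:ℝ)/2, 1/2] ![z, x] := by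
    rw [comb_two_swap, ← hpar, comb_two_swap]
  exact le_antisymm (side_le S x y z t hx hy hpar) (side_le S t z y x ht hz hpar')
end

section
/- Let X be a metric space with a convex-like structure. For u,v ∈ X and α,β ∈ (0,1), d(γ_{α,1−α}(u,v), γ_{β,1−β}(u,v)) ≤ |β−α|·d(u,v), where γ_{λ,1−λ}(u,v) denotes the two-point combination with weights (λ,1−λ). In particular, λ ↦ γ_{λ,1−λ}(u,v) is Lipschitz continuous on (0,1). -/
open scoped BigOperators
open Filter MeasureTheory

/-- A convex-like structure (Brown / Capraro–Fritz) on a metric space. -/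
structure ConvexLike (X : Type) [MetricSpace X] where
  /-- for each probability vector `μ` on `Fin n`, a combination map `γ_μ : Xⁿ → X` -/
  γ : ∀ {n : ℕ}, (Fin n → ℝ) → (Fin n → X) → X
  /-- each `γ_μ` is continuous -/
  γ_continuous : ∀ {n : ℕ} (w : Fin n → ℝ), (∀ i, 0 ≤ w i) → (∑ i, w i) = 1 →
    Continuous fun u : Fin n → X => γ w u
  /-- (γ.1) permutation invariance -/
  γ_perm : ∀ {n : ℕ} (w : Fin n → ℝ) (u : Fin n → X) (σ : Equiv.Perm (Fin n)),
    (∀ i, 0 ≤ w i) → (∑ i, w i) = 1 → γ w u = γ (w ∘ σ) (u ∘ σ)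
  /-- (γ.2) merging of equal arguments -/
  γ_merge : ∀ {n : ℕ} (w : Fin (n + 2) → ℝ) (u : Fin (n + 2) → X),
    (∀ i, 0 ≤ w i) → (∑ i, w i) = 1 → u 0 = u 1 →
    γ w u =
      γ (Fin.cons (w 0 + w 1) fun i : Fin n => w i.succ.succ)
        (Fin.cons (u 0) fun i : Fin n => u i.succ.succ)
  /-- (γ.3) projection when some weight equals `1` -/
  γ_proj : ∀ {n : ℕ} (w : Fin n → ℝ) (u : Fin n → X) (i : Fin n),
    (∀ i, 0 ≤ w i) → (∑ i, w i) = 1 → w i = 1 → γ w u = u i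
  /-- (γ.4) Lipschitz estimate -/
  γ_lip : ∀ {n : ℕ} (w : Fin n → ℝ) (u v : Fin n → X),
    (∀ i, 0 ≤ w i) → (∑ i, w i) = 1 →
    dist (γ w u) (γ w v) ≤ ∑ i, w i * dist (u i) (v i)
  /-- (γ.5) compatibility of nested combinations -/
  γ_nested : ∀ {n m : ℕ} (ν : Fin 2 → ℝ) (w₁ : Fin n → ℝ) (w₂ : Fin m → ℝ)
    (x : Fin n → X) (y : Fin m → X),
    (∀ i, 0 ≤ ν i) → (∑ i, ν i) = 1 →
    (∀ i, 0 ≤ w₁ i) → (∑ i, w₁ i) = 1 →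
    (∀ i, 0 ≤ w₂ i) → (∑ i, w₂ i) = 1 →
    γ ν ![γ w₁ x, γ w₂ y] =
      γ (Fin.append (fun i => ν 0 * w₁ i) (fun j => ν 1 * w₂ j)) (Fin.append x y)

/-!
Write `γ_λ(x, y)` for `γ_{λ,1−λ}(x, y)`. For `α ≤ β` put `t = (β − α)/(1 − α)`. Nesting followed by
merging the two copies of `u` gives `γ_α(u, γ_t(u, v)) = γ_β(u, v)`, so by the Lipschitz estimate
`d(γ_α(u, v), γ_β(u, v)) ≤ (1 − α) d(v, γ_t(u, v)) = (1 − α) d(γ_t(v, v), γ_t(u, v)) ≤ (1 − α) t d(u, v)`,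
and `(1 − α) t = β − α`.
-/

namespace ConvexLike

variable {X : Type} [MetricSpace X] (Γ : ConvexLike X)

lemma pair_nonneg {t : ℝ} (h0 : 0 ≤ t) (h1 : t ≤ 1) : ∀ i, 0 ≤ (![t, 1 - t] : Fin 2 → ℝ) i := by
  intro i
  fin_cases i <;> simp [h0, h1]

lemma sum_pair (t : ℝ) : ∑ i, (![t, 1 - t] : Fin 2 → ℝ) i = 1 := by
  simp

theorem γ_single (x : X) : Γ.γ ![1] ![x] = x :=
  Γ.γ_proj _ _ 0 (by simp) (by simp) rfl

theorem γ_pair_self {t : ℝ} (h0 : 0 ≤ t) (h1 : t ≤ 1) (x : X) :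
    Γ.γ ![t, 1 - t] ![x, x] = x := by
  rw [Γ.γ_merge (n := 0) _ _ (pair_nonneg h0 h1) (sum_pair t) rfl]
  convert Γ.γ_single x using 2 <;> ext i <;> fin_cases i <;> simp

theorem dist_γ_pair_le {t : ℝ} (h0 : 0 ≤ t) (h1 : t ≤ 1) (x y x' y' : X) :
    dist (Γ.γ ![t, 1 - t] ![x, y]) (Γ.γ ![t, 1 - t] ![x', y']) ≤
      t * dist x x' + (1 - t) * dist y y' := by
  simpa [Fin.sum_univ_two] using
    Γ.γ_lip _ ![x, y] ![x', y'] (pair_nonneg h0 h1) (sum_pair t)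

theorem γ_pair_γ_pair_right {α t : ℝ} (hα0 : 0 ≤ α) (hα1 : α ≤ 1) (ht0 : 0 ≤ t) (ht1 : t ≤ 1)
    (u v : X) :
    Γ.γ ![α, 1 - α] ![u, Γ.γ ![t, 1 - t] ![u, v]] =
      Γ.γ ![α + (1 - α) * t, 1 - (α + (1 - α) * t)] ![u, v] := by
  have hw : ∀ i, 0 ≤ (![α, (1 - α) * t, (1 - α) * (1 - t)] : Fin 3 → ℝ) i := by
    intro i
    fin_cases i <;> simp <;> nlinarith
  have hw_sum : ∑ i, (![α, (1 - α) * t, (1 - α) * (1 - t)] : Fin 3 → ℝ) i = 1 := by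
    simp [Fin.sum_univ_three]
    ring
  calc Γ.γ ![α, 1 - α] ![u, Γ.γ ![t, 1 - t] ![u, v]]
      = Γ.γ ![α, (1 - α) * t, (1 - α) * (1 - t)] ![u, u, v] := by
        have h := Γ.γ_nested ![α, 1 - α] ![1] ![t, 1 - t] ![u] ![u, v] (pair_nonneg hα0 hα1)
          (sum_pair α) (by simp) (by simp) (pair_nonneg ht0 ht1) (sum_pair t)
        rw [Γ.γ_single] at h
        rw [h]
        congr 1 <;> ext i <;> fin_cases i <;> simp [Fin.append, Fin.addCases]
    _ = Γ.γ ![α + (1 - α) * t, (1 - α) * (1 - t)] ![u, v] :=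
        Γ.γ_merge (n := 1) _ _ hw hw_sum rfl
    _ = Γ.γ ![α + (1 - α) * t, 1 - (α + (1 - α) * t)] ![u, v] := by
        rw [show 1 - (α + (1 - α) * t) = (1 - α) * (1 - t) by ring]

theorem dist_γ_pair_le_of_le {α β : ℝ} (hα : 0 ≤ α) (hαβ : α ≤ β) (hβ : β ≤ 1) (u v : X) :
    dist (Γ.γ ![α, 1 - α] ![u, v]) (Γ.γ ![β, 1 - β] ![u, v]) ≤ (β - α) * dist u v := by
  rcases hαβ.eq_or_lt with rfl | hlt
  · simp
  have hα1 : α ≤ 1 := hαβ.trans hβ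
  have h1α : 0 < 1 - α := by linarith
  set t := (β - α) / (1 - α)
  have ht0 : 0 ≤ t := div_nonneg (by linarith) h1α.le
  have ht1 : t ≤ 1 := (div_le_one h1α).2 (by linarith)
  have hβt : α + (1 - α) * t = β := by
    simp only [t]
    field_simp
    ring
  have hvt : dist v (Γ.γ ![t, 1 - t] ![u, v]) ≤ t * dist u v := by
    simpa [Γ.γ_pair_self ht0 ht1, dist_comm v u] using Γ.dist_γ_pair_le ht0 ht1 v v u v
  calc dist (Γ.γ ![α, 1 - α] ![u, v]) (Γ.γ ![β, 1 - β] ![u, v])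
      = dist (Γ.γ ![α, 1 - α] ![u, v]) (Γ.γ ![α, 1 - α] ![u, Γ.γ ![t, 1 - t] ![u, v]]) := by
        rw [Γ.γ_pair_γ_pair_right hα hα1 ht0 ht1, hβt]
    _ ≤ (1 - α) * dist v (Γ.γ ![t, 1 - t] ![u, v]) := by
        simpa using Γ.dist_γ_pair_le hα hα1 u v u (Γ.γ ![t, 1 - t] ![u, v])
    _ ≤ (1 - α) * (t * dist u v) := mul_le_mul_of_nonneg_left hvt h1α.le
    _ = (β - α) * dist u v := by
        simp only [t]
        field_simp

theorem dist_γ_pair_le_abs {α β : ℝ} (hα : α ∈ Set.Icc (0 : ℝ) 1) (hβ : β ∈ Set.Icc (0 : ℝ) 1)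
    (u v : X) :
    dist (Γ.γ ![α, 1 - α] ![u, v]) (Γ.γ ![β, 1 - β] ![u, v]) ≤ |β - α| * dist u v := by
  rcases le_total α β with h | h
  · rw [abs_of_nonneg (sub_nonneg.2 h)]
    exact Γ.dist_γ_pair_le_of_le hα.1 h hβ.2 u v
  · rw [abs_sub_comm, abs_of_nonneg (sub_nonneg.2 h), dist_comm]
    exact Γ.dist_γ_pair_le_of_le hβ.1 h hα.2 u v

theorem lipschitzOnWith_γ_pair (u v : X) :
    LipschitzOnWith (nndist u v) (fun t : ℝ => Γ.γ ![t, 1 - t] ![u, v]) (Set.Icc 0 1) := by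
  rw [lipschitzOnWith_iff_dist_le_mul]
  intro α hα β hβ
  rw [coe_nndist, Real.dist_eq, abs_sub_comm, mul_comm]
  exact Γ.dist_γ_pair_le_abs hα hβ u v

end ConvexLike

/-- In a metric space with a convex-like structure, two-point combinations are
Lipschitz in the weight: `d(γ_{α,1−α}(u,v), γ_{β,1−β}(u,v)) ≤ |β−α| d(u,v)`,
so `λ ↦ γ_{λ,1−λ}(u,v)` is Lipschitz on `(0,1)`. -/
theorem stmt8 {X : Type} [MetricSpace X] (Γ : ConvexLike X) (u v : X) :
    (∀ α β : ℝ, α ∈ Set.Ioo (0 : ℝ) 1 → β ∈ Set.Ioo (0 : ℝ) 1 →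
      dist (Γ.γ ![α, 1 - α] ![u, v]) (Γ.γ ![β, 1 - β] ![u, v]) ≤
        |β - α| * dist u v) ∧
    LipschitzOnWith (nndist u v) (fun t : ℝ => Γ.γ ![t, 1 - t] ![u, v])
      (Set.Ioo (0 : ℝ) 1) :=
  ⟨fun _ _ hα hβ =>
      Γ.dist_γ_pair_le_abs (Set.Ioo_subset_Icc_self hα) (Set.Ioo_subset_Icc_self hβ) u v,
    (Γ.lipschitzOnWith_γ_pair u v).mono Set.Ioo_subset_Icc_self⟩
end

section
/- Let X be a convexifiable CC space embedded isometrically and affinely as a closed convex subset F of a Banach space E (with 0 ∈ F). If f : X → ℝ is a continuous affine function, then there exists a constant C such that |f(x)| ≤ C·(d(θ,x) + 1) for all x ∈ X, where θ is the point of X mapped to 0. Consequently, f(Y) is integrable for every integrable X-valued random element Y. -/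
open scoped BigOperators
open Filter MeasureTheory

/-- If a convexifiable CC space is embedded isometrically and affinely as a
closed convex subset of a Banach space (with `0` in the image, `j θ = 0`), then
every continuous affine `f : X → ℝ` satisfies a linear growth bound
`|f x| ≤ C (d(θ,x) + 1)`; consequently `f ∘ Y` is integrable for every
integrable random element `Y`. -/
theorem stmt9 {X : Type} [MetricSpace X] (S : CCSpace X)
    (hconv : ∀ x : X, S.K x = x)
    {E : Type} [NormedAddCommGroup E] [NormedSpace ℝ E] [CompleteSpace E]
    (j : X → E) (hclosed : IsClosed (Set.range j))
    (hconvex : Convex ℝ (Set.range j))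
    (haff : ∀ (x y : X) (t : ℝ), t ∈ Set.Icc (0 : ℝ) 1 →
      j (S.comb2 t x y) = t • j x + (1 - t) • j y)
    (hiso : ∀ x y : X, dist x y = ‖j x - j y‖)
    (θ : X) (hθ : j θ = 0)
    (f : X → ℝ) (hf : Continuous f) (hfa : S.IsAffine f) :
    (∃ C : ℝ, ∀ x : X, |f x| ≤ C * (dist θ x + 1)) ∧
      (∀ (Ω : Type) (mΩ : MeasurableSpace Ω) (μ : Measure Ω),
        IsProbabilityMeasure μ → ∀ Y : Ω → X, AEStronglyMeasurable Y μ →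
          Integrable (fun ω => dist θ (Y ω)) μ →
          Integrable (fun ω => f (Y ω)) μ) := by
  have hbound : ∃ C : ℝ, ∀ x : X, |f x| ≤ C * (dist θ x + 1) := by
    obtain ⟨δ, hδ, hcont⟩ := Metric.continuousAt_iff.1 (hf.continuousAt (x := θ)) 1 one_pos
    refine ⟨(|f θ| + 1) + 2 / δ, fun x => ?_⟩
    have hC0 : 0 ≤ (|f θ| + 1) + 2 / δ := by positivity
    by_cases hx : dist θ x < δ
    · have h1 : dist (f x) (f θ) < 1 := hcont (by rwa [dist_comm] at hx)
      rw [Real.dist_eq] at h1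
      have : |f x| ≤ |f x - f θ| + |f θ| := by
        have := abs_add_le (f x - f θ) (f θ); simpa using this
      nlinarith [dist_nonneg (x := θ) (y := x), abs_nonneg (f θ), div_nonneg (by norm_num : (0:ℝ) ≤ 2) hδ.le]
    · push_neg at hx
      set d := dist θ x with hd
      have hdpos : 0 < d := lt_of_lt_of_le hδ hx
      set t := δ / (2 * d) with htdef
      have ht0 : 0 < t := by positivity
      have ht1 : t < 1 := by
        rw [htdef, div_lt_one (by positivity)]
        nlinarith
      -- the combination point
      set z := S.comb ![t, 1 - t] ![x, θ] with hz
      have hcomb2 : S.comb2 t x θ = z := by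
        rw [CCSpace.comb2, if_neg (ne_of_gt ht0), if_neg (ne_of_lt ht1)]
      have hjz : j z = t • j x := by
        have := haff x θ t ⟨ht0.le, ht1.le⟩
        rw [hcomb2] at this
        rw [this, hθ, smul_zero, add_zero]
      have hdistz : dist z θ = t * d := by
        rw [hiso, hjz, hθ, sub_zero, norm_smul, Real.norm_eq_abs, abs_of_pos ht0]
        rw [hd, dist_comm, hiso, hθ, sub_zero]
      have hdz : dist z θ < δ := by
        rw [hdistz, htdef, div_mul_eq_mul_div, div_lt_iff₀ (by positivity)]
        nlinarith
      have hfz : f z = t * f x + (1 - t) * f θ := by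
        have hw : ∀ i : Fin 2, 0 < ![t, 1 - t] i := by
          intro i; fin_cases i <;> simp [ht0, ht1] <;> linarith
        have hs : (∑ i, ![t, 1 - t] i) = 1 := by
          simp [Fin.sum_univ_two]
        have := hfa ![t, 1 - t] ![x, θ] hw hs
        simpa [Fin.sum_univ_two] using this
      have h1 : dist (f z) (f θ) < 1 := hcont hdz
      rw [Real.dist_eq] at h1
      have hfd : f z - f θ = t * (f x - f θ) := by rw [hfz]; ring
      have h2 : t * |f x - f θ| < 1 := by
        have := h1; rw [hfd, abs_mul, abs_of_pos ht0] at this; exact this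
      have h3 : |f x - f θ| < 2 * d / δ := by
        rw [lt_div_iff₀ hδ]
        have : t * |f x - f θ| * (2 * d) < 1 * (2 * d) :=
          mul_lt_mul_of_pos_right h2 (by positivity)
        calc |f x - f θ| * δ = t * |f x - f θ| * (2 * d) := by
              rw [htdef]; field_simp
          _ < 1 * (2 * d) := this
          _ = 2 * d := by ring
      have h4 : |f x| ≤ |f θ| + 2 * d / δ := by
        have := abs_add_le (f x - f θ) (f θ)
        have h5 : |f x| ≤ |f x - f θ| + |f θ| := by simpa using this
        linarith
      have hdd : 2 * d / δ = (2 / δ) * d := by ring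
      rw [hdd] at h4
      nlinarith [abs_nonneg (f θ), div_nonneg (by norm_num : (0:ℝ) ≤ 2) hδ.le, hdpos.le]
  obtain ⟨C, hC⟩ := hbound
  refine ⟨⟨C, hC⟩, fun Ω mΩ μ hμ Y hY hint => ?_⟩
  have hmeas : AEStronglyMeasurable (fun ω => f (Y ω)) μ :=
    hf.comp_aestronglyMeasurable hY
  have hgint : Integrable (fun ω => C * (dist θ (Y ω) + 1)) μ :=
    (hint.add (integrable_const 1)).const_mul C
  refine hgint.mono' hmeas ?_
  filter_upwards with ω
  simpa [Real.norm_eq_abs] using hC (Y ω)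
end

section
/- Let X be a CC space and φ : X → ℝ a midpoint convex, lower semicontinuous function. Then φ(Kx) ≤ φ(x) for every x ∈ X, where K is the convexification operator. -/
open scoped BigOperators
open Filter MeasureTheory

/-!
Along the dyadic subsequence, `[2⁻⁽ᵐ⁺¹⁾, x]` equals `[2⁻ᵐ, μ]` with `μ = [1/2, x; 1/2, x]`:
commutativity and associativity let one merge the copies of `x` pairwise into copies of `μ`.
Since `φ μ ≤ φ x` by midpoint convexity, induction gives `φ [2⁻ᵐ, x] ≤ φ x`. These points
converge to `K x`, and the sublevel set `{φ ≤ φ x}` is closed because `φ` is lower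
semicontinuous.
-/

theorem Fin.sum_ite_val_lt {M : Type*} [AddCommMonoid M] (a b : ℕ) (p q : M) :
    ∑ i : Fin (a + b), (if (i : ℕ) < a then p else q) = a • p + b • q := by
  simp [Fin.sum_univ_add]

namespace CCSpace

variable {X : Type} [MetricSpace X] (S : CCSpace X)

theorem comb_congr {m n : ℕ} (h : m = n) {w : Fin m → ℝ} {u : Fin m → X}
    {w' : Fin n → ℝ} {u' : Fin n → X}
    (hw : ∀ i, w i = w' (Fin.cast h i)) (hu : ∀ i, u i = u' (Fin.cast h i)) :
    S.comb w u = S.comb w' u' := by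
  subst h
  rw [funext hw, funext hu]
  rfl

theorem comb_snoc_ite {j m : ℕ} {a b : ℝ} (ha : 0 < a) (hb : 0 < b)
    (hsum : (j + 1 : ℕ) * a + m * b = 1) (y z : X) :
    S.comb (Fin.snoc (fun i : Fin (j + m) => if (i : ℕ) < j then a else b) a)
        (Fin.snoc (fun i : Fin (j + m) => if (i : ℕ) < j then y else z) y)
      = S.comb (fun i : Fin (j + 1 + m) => if (i : ℕ) < j + 1 then a else b)
          (fun i => if (i : ℕ) < j + 1 then y else z) := by
  set W : Fin (j + m + 1) → ℝ := Fin.snoc (fun i : Fin (j + m) => if (i : ℕ) < j then a else b) a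
  have hpos : ∀ i, 0 < W i :=
    Fin.lastCases (by simpa [W] using ha) fun i => by
      simp only [W, Fin.snoc_castSucc]; split_ifs <;> assumption
  have hsum' : ∑ i, W i = 1 := by
    rw [Fin.sum_univ_castSucc]
    simp only [W, Fin.snoc_castSucc, Fin.snoc_last, Fin.sum_ite_val_lt, nsmul_eq_mul]
    push_cast at hsum
    linear_combination hsum
  rw [S.comb_perm _ _ (Equiv.swap ⟨j, by omega⟩ (Fin.last _)) hpos hsum']
  refine S.comb_congr (by omega) (fun i => ?_) (fun i => ?_) <;>
  · simp only [W, Function.comp_apply, Equiv.swap_apply_def, Fin.snoc, Fin.ext_iff, Fin.val_last,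
      Fin.val_cast, apply_ite Fin.val, Fin.val_castLT, cast_eq]
    split_ifs <;> first | rfl | omega

theorem comb_merge_pairs (x : X) (j k : ℕ) {w : ℝ} (hw : (2 * j + 2 * k : ℝ) * w = 1) :
    S.comb (fun i : Fin (j + 2 * k) => if (i : ℕ) < j then 2 * w else w)
        (fun i => if (i : ℕ) < j then S.comb ![1 / 2, 1 / 2] ![x, x] else x)
      = S.comb (fun _ : Fin (j + k) => 2 * w) (fun _ => S.comb ![1 / 2, 1 / 2] ![x, x]) := by
  induction k generalizing j with
  | zero => congr 1 <;> funext i <;> simp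
  | succ k ih =>
    set μ := S.comb ![(1 : ℝ) / 2, 1 / 2] ![x, x]
    have hw_pos : 0 < w := pos_of_mul_pos_right (hw ▸ one_pos) (by positivity)
    have hsum : ∑ i : Fin (j + 2 * (k + 1)), (if (i : ℕ) < j then 2 * w else w) = 1 := by
      rw [Fin.sum_ite_val_lt]; push_cast at hw ⊢; linear_combination hw
    have hmerge := S.comb_assoc (n := j + 2 * k)
      (fun i => if (i : ℕ) < j then 2 * w else w) (fun i => if (i : ℕ) < j then μ else x)
      (fun i => by split_ifs <;> positivity) hsum
    have hhalf : w / (2 * w) = 1 / 2 := by field_simp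
    have hlast : ¬ j + 2 * k + 1 < j := by omega
    -- the last two copies of `x` merge into `μ`, which is then moved into the leading block
    simp only [Fin.val_castLE, add_lt_iff_neg_left, not_lt_zero, if_false, hlast, ← two_mul,
      hhalf] at hmerge
    refine hmerge.trans ?_
    rw [S.comb_snoc_ite (by positivity) hw_pos (by push_cast at hw ⊢; linear_combination hw),
      ih (j + 1) (by push_cast at hw ⊢; linear_combination hw)]
    exact S.comb_congr (by omega) (fun _ => rfl) (fun _ => rfl)

noncomputable def uniform (n : ℕ) (x : X) : X :=
  S.comb (fun _ : Fin n => (n : ℝ)⁻¹) (fun _ => x)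

theorem uniform_one (x : X) : S.uniform 1 x = x := by
  simpa only [uniform, Nat.cast_one, inv_one] using S.comb_single x

theorem uniform_two_mul (n : ℕ) (x : X) :
    S.uniform (2 * n) x = S.uniform n (S.comb ![1 / 2, 1 / 2] ![x, x]) := by
  rcases n.eq_zero_or_pos with rfl | hn
  · exact S.comb_congr rfl (fun i => i.elim0) (fun i => i.elim0)
  have hw : (2 * (0 : ℕ) + 2 * n : ℝ) * (2 * n : ℝ)⁻¹ = 1 := by
    rw [Nat.cast_zero, mul_zero, zero_add]; field_simp
  calc S.uniform (2 * n) x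
      = S.comb
          (fun i : Fin (0 + 2 * n) => if (i : ℕ) < 0 then 2 * (2 * n : ℝ)⁻¹ else (2 * n : ℝ)⁻¹)
          (fun i => if (i : ℕ) < 0 then S.comb ![1 / 2, 1 / 2] ![x, x] else x) :=
        S.comb_congr (by omega) (fun _ => by simp) (fun _ => by simp)
    _ = S.comb (fun _ : Fin (0 + n) => 2 * (2 * n : ℝ)⁻¹)
          (fun _ => S.comb ![1 / 2, 1 / 2] ![x, x]) := S.comb_merge_pairs x 0 n hw
    _ = S.uniform n (S.comb ![1 / 2, 1 / 2] ![x, x]) :=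
        S.comb_congr (by omega) (fun _ => by field_simp) (fun _ => rfl)

variable {S} in
theorem MidpointConvex.apply_uniform_two_pow_le {φ : X → ℝ} (hφ : S.MidpointConvex φ) (m : ℕ)
    (x : X) : φ (S.uniform (2 ^ m) x) ≤ φ x := by
  induction m generalizing x with
  | zero => rw [pow_zero, uniform_one]
  | succ m ih =>
    calc φ (S.uniform (2 ^ (m + 1)) x)
        = φ (S.uniform (2 ^ m) (S.comb ![1 / 2, 1 / 2] ![x, x])) := by
          rw [pow_succ', uniform_two_mul]
      _ ≤ φ (S.comb ![1 / 2, 1 / 2] ![x, x]) := ih _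
      _ ≤ φ x := by linarith [hφ x x]

end CCSpace

/-- If `φ` is midpoint convex and lower semicontinuous on a CC space, then
`φ(Kx) ≤ φ(x)` for every `x`. -/
theorem stmt11 {X : Type} [MetricSpace X] (S : CCSpace X) (φ : X → ℝ)
    (hmc : S.MidpointConvex φ) (hlsc : LowerSemicontinuous φ) (x : X) :
    φ (S.K x) ≤ φ x := by
  have hlim : Tendsto (fun m : ℕ => S.uniform (2 ^ m) x) atTop (nhds (S.K x)) :=
    (S.tendsto_K x).comp (tendsto_pow_atTop_atTop_of_one_lt one_lt_two)
  exact (hlsc.isClosed_preimage (φ x)).mem_of_tendsto hlim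
    (Eventually.of_forall fun m => hmc.apply_uniform_two_pow_le m x)
end
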